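/- arXiv:1304.7442 — 2 statements merged into one kernel-verified Lean document; each statement's English description precedes it below -/
import Mathlib

section
/- Let A₁, …, A_m : Matrix (Fin k) (Fin n) ℂ satisfy ∑ᵢ Aᵢᴴ·Aᵢ = 1ₙ, and define Φ : Matrix (Fin n) (Fin n) ℂ → Matrix (Fin k) (Fin k) ℂ by Φ(X) = ∑ᵢ Aᵢ·X·Aᵢᴴ. Then S(Φ(ρ)) = S(ρ) for every density matrix ρ : Matrix (Fin n) (Fin n) ℂ if and only if there exists an isometry V : Matrix (Fin k) (Fin n) ℂ (i.e. Vᴴ·V = 1ₙ) such that Φ(X) = V·X·Vᴴ for all X : Matrix (Fin n) (Fin n) ℂ. -/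
/-!
An isometry `V` preserves the nonzero spectrum: `Xⁿ·χ(V σ Vᴴ) = Xᵏ·χ(Vᴴ V σ) = Xᵏ·χ(σ)`.
Conversely, a density matrix has zero entropy iff it has rank at most one, so an
entropy-preserving channel maps pure states to pure states: for each `ψ` the vectors `Aᵢ ψ`
span at most a line. A family of linear maps with this property either consists of multiples
`cᵢ • B` of a single map, or takes all its values in a single line. In the second case `Φ` maps
the maximally mixed state, of rank `n`, to a pure state, which is impossible when `n ≥ 2`.
If `Aᵢ = cᵢ • B`, then `V = (∑ |cᵢ|²)^{1/2} • B` is the required isometry.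
-/

open Matrix ComplexOrder

/-- The von Neumann entropy of a (Hermitian) matrix: `S(M) = ∑ᵢ φ(λᵢ(M))`,
where `φ(x) = -x·log x` and the `λᵢ(M)` are the eigenvalues of `M` (with
multiplicity). Junk value `0` for non-Hermitian matrices. -/
noncomputable def vnEntropy {d : ℕ} (M : Matrix (Fin d) (Fin d) ℂ) : ℝ :=
  haveI := Classical.dec M.IsHermitian
  if h : M.IsHermitian then ∑ i, Real.negMulLog (h.eigenvalues i) else 0

section LinearAlgebra

variable {K E F : Type*} [Field K] [AddCommGroup E] [Module K E] [AddCommGroup F] [Module K F]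

open Submodule

theorem Submodule.mem_span_singleton_of_mem_of_ne_zero {u x y : F} (hx : x ∈ K ∙ u)
    (hx0 : x ≠ 0) (hy : y ∈ K ∙ u) : y ∈ K ∙ x := by
  obtain ⟨a, rfl⟩ := mem_span_singleton.1 hx
  have ha : a ≠ 0 := by rintro rfl; simp at hx0
  refine span_singleton_le_iff_mem _ _ |>.2 ?_ hy
  exact mem_span_singleton.2 ⟨a⁻¹, by rw [smul_smul, inv_mul_cancel₀ ha, one_smul]⟩

theorem LinearMap.exists_eq_smul_of_mem_span_singleton {g h : E →ₗ[K] F}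
    (hgh : ∀ x, g x ≠ 0 → h x ∈ K ∙ g x) {x₁ x₂ : E}
    (hli : LinearIndependent K ![g x₁, g x₂]) : ∃ c : K, h = c • g := by
  have hg₁ : g x₁ ≠ 0 := by simpa using hli.ne_zero 0
  have hg₂ : g x₂ ∉ K ∙ g x₁ := fun hmem => by
    obtain ⟨a, ha⟩ := mem_span_singleton.1 hmem
    exact (LinearIndependent.pair_iff' hg₁).1 hli a ha
  obtain ⟨c, hc⟩ := mem_span_singleton.1 (hgh x₁ hg₁)
  -- Comparing `h x`, `h x₁` and `h (x₁ + x)` in the basis `g x₁, g x` pins the ratio to `c`.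
  have off_line : ∀ x, g x ∉ K ∙ g x₁ → h x = c • g x := by
    intro x hx
    have hli' : LinearIndependent K ![g x₁, g x] :=
      (LinearIndependent.pair_iff' hg₁).2 fun a ha =>
        hx (ha ▸ smul_mem _ _ (mem_span_singleton_self _))
    have hx0 : g x ≠ 0 := by simpa using hli'.ne_zero 1
    have hsum0 : g (x₁ + x) ≠ 0 := by
      rw [map_add]
      intro h0
      simpa using LinearIndependent.pair_iff.1 hli' 1 1 (by simpa using h0)
    obtain ⟨a, ha⟩ := mem_span_singleton.1 (hgh x hx0)
    obtain ⟨b, hb⟩ := mem_span_singleton.1 (hgh (x₁ + x) hsum0)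
    rw [map_add, map_add, ← hc, ← ha, smul_add] at hb
    have hcoef := LinearIndependent.pair_iff.1 hli' (b - c) (b - a) (by
      rw [sub_smul, sub_smul, ← add_sub_add_comm, hb, sub_self])
    rw [← ha, ← sub_eq_zero.1 hcoef.2, sub_eq_zero.1 hcoef.1]
  refine ⟨c, LinearMap.ext fun x => ?_⟩
  by_cases hx : g x ∈ K ∙ g x₁
  · have hx₂ : g (x + x₂) ∉ K ∙ g x₁ := fun hmem =>
      hg₂ (by simpa [map_add] using sub_mem hmem hx)
    have := off_line (x + x₂) hx₂
    rw [map_add, map_add, off_line x₂ hg₂, smul_add] at this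
    simpa using this
  · exact off_line x hx

theorem LinearMap.exists_forall_mem_span_singleton_of_not_linearIndependent {ι : Type*}
    (f : ι → E →ₗ[K] F) (hf : ∀ x, ∃ u, ∀ i, f i x ∈ K ∙ u)
    (hrank : ∀ i x y, ¬LinearIndependent K ![f i x, f i y]) :
    ∃ u, ∀ i x, f i x ∈ K ∙ u := by
  by_cases h0 : ∀ i x, f i x = 0
  · exact ⟨0, fun i x => by simp [h0 i x]⟩
  push Not at h0
  obtain ⟨i₁, x₀, hne⟩ := h0
  have on_support : ∀ x, f i₁ x ≠ 0 → ∀ i, f i x ∈ K ∙ f i₁ x₀ := by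
    intro x hx i
    obtain ⟨u, hu⟩ := hf x
    have hx₀ : f i₁ x ∈ K ∙ f i₁ x₀ := by
      have := hrank i₁ x₀ x
      rw [LinearIndependent.pair_iff' hne] at this
      push Not at this
      exact mem_span_singleton.2 this
    exact span_singleton_le_iff_mem _ _ |>.2 hx₀
      (mem_span_singleton_of_mem_of_ne_zero (hu i₁) hx (hu i))
  refine ⟨f i₁ x₀, fun i x => ?_⟩
  by_cases hx : f i₁ x = 0
  · have hx' : f i₁ (x + x₀) ≠ 0 := by simpa [hx] using hne
    simpa using sub_mem (on_support _ hx' i) (on_support x₀ hne i)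
  · exact on_support x hx i

theorem LinearMap.exists_eq_smul_or_exists_mem_span_singleton {ι : Type*} (f : ι → E →ₗ[K] F)
    (hf : ∀ x, ∃ u, ∀ i, f i x ∈ K ∙ u) :
    (∃ g : E →ₗ[K] F, ∀ i, ∃ c : K, f i = c • g) ∨ ∃ u, ∀ i x, f i x ∈ K ∙ u := by
  by_cases hli : ∃ i₀ x₁ x₂, LinearIndependent K ![f i₀ x₁, f i₀ x₂]
  · obtain ⟨i₀, x₁, x₂, hli⟩ := hli
    refine .inl ⟨f i₀, fun i => exists_eq_smul_of_mem_span_singleton (fun x hx => ?_) hli⟩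
    obtain ⟨u, hu⟩ := hf x
    exact mem_span_singleton_of_mem_of_ne_zero (hu i₀) hx (hu i)
  · push Not at hli
    exact .inr (exists_forall_mem_span_singleton_of_not_linearIndependent f hf hli)

end LinearAlgebra

section MatrixLemmas

variable {K ι m n : Type*} [Field K] [Fintype n]

theorem Matrix.exists_eq_smul_or_exists_mulVec_mem_span_singleton [DecidableEq n]
    (A : ι → Matrix m n K) (hA : ∀ x, ∃ u, ∀ i, A i *ᵥ x ∈ K ∙ u) :
    (∃ B : Matrix m n K, ∀ i, ∃ c : K, A i = c • B) ∨ ∃ u, ∀ i x, A i *ᵥ x ∈ K ∙ u := by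
  rcases LinearMap.exists_eq_smul_or_exists_mem_span_singleton (fun i => toLin' (A i)) hA
    with ⟨g, hg⟩ | h
  · refine .inl ⟨toLin'.symm g, fun i => ?_⟩
    obtain ⟨c, hc⟩ := hg i
    exact ⟨c, toLin'.injective (by rw [map_smul, LinearEquiv.apply_symm_apply, hc])⟩
  · exact .inr h

theorem Matrix.exists_eq_smul_of_subsingleton [Subsingleton n] {A : ι → Matrix m n K}
    {u : m → K} (hu : ∀ i, A i *ᵥ (fun _ => 1) ∈ K ∙ u) :
    ∃ B : Matrix m n K, ∀ i, ∃ c : K, A i = c • B := by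
  refine ⟨of fun a _ => u a, fun i => ?_⟩
  obtain ⟨c, hc⟩ := Submodule.mem_span_singleton.1 (hu i)
  refine ⟨c, ext fun a j => ?_⟩
  have := congrFun hc a
  simp only [mulVec, dotProduct, mul_one, Fintype.sum_subsingleton _ j] at this
  simp [← this]

theorem Matrix.exists_forall_col_mem_span_singleton_of_rank_le_one [DecidableEq n]
    {M : Matrix m n K} (hM : M.rank ≤ 1) : ∃ u, ∀ j, M.col j ∈ K ∙ u := by
  obtain ⟨u, hu⟩ := finrank_le_one_iff.1 hM
  refine ⟨u, fun j => Submodule.mem_span_singleton.2 ?_⟩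
  obtain ⟨c, hc⟩ := hu ⟨M.col j, Pi.single j 1, by simp⟩
  exact ⟨c, congrArg Subtype.val hc⟩

theorem exists_eq_smul_with_dotProduct_star_self_eq_one {𝕜 : Type*} [RCLike 𝕜] {ψ : n → 𝕜}
    (hψ : ψ ≠ 0) : ∃ (r : 𝕜) (v : n → 𝕜), star v ⬝ᵥ v = 1 ∧ ψ = r • v := by
  obtain ⟨hre, him⟩ := RCLike.pos_iff.1 (dotProduct_star_self_pos_iff.2 hψ)
  set r : 𝕜 := ((√(RCLike.re (star ψ ⬝ᵥ ψ)) : ℝ) : 𝕜)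
  have hr : r ≠ 0 := by simpa [r] using Real.sqrt_ne_zero'.2 hre
  have hs : star ψ ⬝ᵥ ψ = r * r := by
    rw [← RCLike.ofReal_mul, Real.mul_self_sqrt hre.le]
    exact RCLike.ext (by simp) (by simp [him])
  refine ⟨r, r⁻¹ • ψ, ?_, by rw [smul_smul, mul_inv_cancel₀ hr, one_smul]⟩
  rw [star_smul, smul_dotProduct, dotProduct_smul, hs, smul_eq_mul, smul_eq_mul]
  simp only [star_inv₀, RCLike.star_def, RCLike.conj_ofReal, r]
  field_simp

end MatrixLemmas

section Kraus

variable {𝕜 ι m n : Type*} [RCLike 𝕜] [Fintype ι] [Fintype n]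

def krausMap (A : ι → Matrix m n 𝕜) (X : Matrix n n 𝕜) : Matrix m m 𝕜 :=
  ∑ i, A i * X * (A i)ᴴ

theorem posSemidef_krausMap [Fintype m] (A : ι → Matrix m n 𝕜) {X : Matrix n n 𝕜}
    (hX : X.PosSemidef) : (krausMap A X).PosSemidef :=
  posSemidef_sum _ fun i _ => hX.mul_mul_conjTranspose_same (A i)

theorem trace_krausMap [Fintype m] [DecidableEq n] {A : ι → Matrix m n 𝕜}
    (hA : ∑ i, (A i)ᴴ * A i = 1) (X : Matrix n n 𝕜) : (krausMap A X).trace = X.trace := by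
  rw [krausMap, trace_sum]
  simp_rw [trace_mul_cycle _ X]
  rw [← trace_sum, ← Finset.sum_mul, hA, Matrix.one_mul]

theorem krausMap_vecMulVec (A : ι → Matrix m n 𝕜) (v : n → 𝕜) :
    krausMap A (vecMulVec v (star v)) =
      (of fun a i => (A i *ᵥ v) a) * (of fun a i => (A i *ᵥ v) a)ᴴ := by
  ext a b
  simp [krausMap, mul_vecMulVec, vecMulVec_mul, ← star_mulVec, Matrix.sum_apply, mul_apply,
    vecMulVec_apply]

theorem rank_krausMap_le_one [Fintype m] {A : ι → Matrix m n 𝕜} {u : m → 𝕜}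
    (hu : ∀ i x, A i *ᵥ x ∈ 𝕜 ∙ u) (X : Matrix n n 𝕜) : (krausMap A X).rank ≤ 1 := by
  have hrange : LinearMap.range (krausMap A X).mulVecLin ≤ 𝕜 ∙ u := by
    rintro _ ⟨y, rfl⟩
    simp only [krausMap, mulVecLin_apply, sum_mulVec, ← mulVec_mulVec]
    exact Submodule.sum_mem _ fun i _ => hu i _
  calc (krausMap A X).rank ≤ Module.finrank 𝕜 (𝕜 ∙ u) := Submodule.finrank_mono hrange
    _ ≤ 1 := by simpa using finrank_span_le_card ({u} : Set (m → 𝕜))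

theorem exists_isometry_of_forall_eq_smul [Fintype m] [DecidableEq n] {A : ι → Matrix m n 𝕜}
    (hA : ∑ i, (A i)ᴴ * A i = 1) {B : Matrix m n 𝕜} (hB : ∀ i, ∃ c : 𝕜, A i = c • B) :
    ∃ V : Matrix m n 𝕜, Vᴴ * V = 1 ∧ ∀ X, krausMap A X = V * X * Vᴴ := by
  choose c hc using hB
  set w : 𝕜 := ((√(∑ i, ‖c i‖ ^ 2) : ℝ) : 𝕜)
  have hw : w * star w = ∑ i, c i * star (c i) := by
    simp only [w, RCLike.star_def, RCLike.conj_ofReal, ← RCLike.ofReal_mul,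
      Real.mul_self_sqrt (by positivity : (0 : ℝ) ≤ ∑ i, ‖c i‖ ^ 2), RCLike.mul_conj]
    push_cast
    rfl
  refine ⟨w • B, ?_, fun X => ?_⟩
  · simp only [← hA, hc, conjTranspose_smul, smul_mul, Matrix.mul_smul, smul_smul,
      ← Finset.sum_smul, hw]
  · simp only [krausMap, hc, conjTranspose_smul, smul_mul, Matrix.mul_smul, smul_smul,
      ← Finset.sum_smul, mul_comm (star _), hw]

end Kraus

section Entropy

open Polynomial

theorem vnEntropy_eq_sum_eigenvalues {d : ℕ} {M : Matrix (Fin d) (Fin d) ℂ}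
    (hM : M.IsHermitian) : vnEntropy M = ∑ i, Real.negMulLog (hM.eigenvalues i) := by
  simp [vnEntropy, hM]

theorem vnEntropy_eq_sum_roots_charpoly {d : ℕ} {M : Matrix (Fin d) (Fin d) ℂ}
    (hM : M.IsHermitian) :
    vnEntropy M = (M.charpoly.roots.map fun z => Real.negMulLog z.re).sum := by
  rw [vnEntropy_eq_sum_eigenvalues hM, hM.roots_charpoly_eq_eigenvalues, Multiset.map_map]
  simp [Function.comp_def, Finset.sum]

theorem vnEntropy_mul_comm {k n : ℕ} (B : Matrix (Fin k) (Fin n) ℂ) (C : Matrix (Fin n) (Fin k) ℂ)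
    (hBC : (B * C).IsHermitian) (hCB : (C * B).IsHermitian) :
    vnEntropy (B * C) = vnEntropy (C * B) := by
  have h := congrArg (fun p : ℂ[X] => (p.roots.map fun z => Real.negMulLog z.re).sum)
    (charpoly_mul_comm' B C)
  simp only [roots_mul (mul_ne_zero (pow_ne_zero _ X_ne_zero) (charpoly_monic _).ne_zero),
    roots_X_pow, Fintype.card_fin, Multiset.map_add, Multiset.sum_add, Multiset.map_nsmul,
    Multiset.sum_nsmul, Multiset.map_singleton, Multiset.sum_singleton, Complex.zero_re,
    Real.negMulLog_zero, smul_zero, zero_add] at h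
  rw [vnEntropy_eq_sum_roots_charpoly hBC, vnEntropy_eq_sum_roots_charpoly hCB, h]

theorem vnEntropy_conj_isometry {k n : ℕ} {V : Matrix (Fin k) (Fin n) ℂ} (hV : Vᴴ * V = 1)
    {σ : Matrix (Fin n) (Fin n) ℂ} (hσ : σ.IsHermitian) :
    vnEntropy (V * σ * Vᴴ) = vnEntropy σ := by
  have hCB : Vᴴ * (V * σ) = σ := by rw [← Matrix.mul_assoc, hV, Matrix.one_mul]
  rw [vnEntropy_mul_comm (V * σ) Vᴴ (isHermitian_mul_mul_conjTranspose V hσ) (by rwa [hCB]),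
    hCB]

theorem Real.negMulLog_eq_zero_iff {x : ℝ} (hx : 0 ≤ x) : negMulLog x = 0 ↔ x = 0 ∨ x = 1 := by
  rw [negMulLog, neg_mul, neg_eq_zero, mul_eq_zero, Real.log_eq_zero]
  constructor
  · rintro (h | h | h | h) <;> first | exact Or.inl h | exact Or.inr h | linarith
  · rintro (h | h) <;> simp [h]

theorem sum_negMulLog_eq_zero_iff {ι : Type*} [Fintype ι] {p : ι → ℝ} (hp : ∀ i, 0 ≤ p i)
    (hsum : ∑ i, p i = 1) :
    ∑ i, Real.negMulLog (p i) = 0 ↔ Fintype.card {i // p i ≠ 0} ≤ 1 := by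
  have hle : ∀ i, p i ≤ 1 := fun i =>
    hsum ▸ Finset.single_le_sum (fun j _ => hp j) (Finset.mem_univ i)
  rw [Finset.sum_eq_zero_iff_of_nonneg fun i _ => Real.negMulLog_nonneg (hp i) (hle i)]
  simp only [Finset.mem_univ, true_implies, Real.negMulLog_eq_zero_iff (hp _)]
  constructor
  · intro h01
    have hcard : ∑ i, p i = Fintype.card {i // p i ≠ 0} := by
      rw [Fintype.card_subtype, ← Finset.sum_boole]
      exact Finset.sum_congr rfl fun i _ => by rcases h01 i with h | h <;> simp [h]
    exact_mod_cast (hcard.symm.trans hsum).le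
  · intro hcard i
    refine or_iff_not_imp_left.2 fun hi => ?_
    rw [← hsum, Finset.sum_eq_single i]
    · intro j _ hji
      by_contra hj
      exact hji (congrArg Subtype.val (Fintype.card_le_one_iff.1 hcard ⟨j, hj⟩ ⟨i, hi⟩))
    · simp

theorem vnEntropy_eq_zero_iff_rank_le_one {d : ℕ} {ρ : Matrix (Fin d) (Fin d) ℂ}
    (hρ : ρ.PosSemidef) (htr : ρ.trace = 1) : vnEntropy ρ = 0 ↔ ρ.rank ≤ 1 := by
  rw [vnEntropy_eq_sum_eigenvalues hρ.isHermitian, hρ.isHermitian.rank_eq_card_non_zero_eigs]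
  refine sum_negMulLog_eq_zero_iff hρ.eigenvalues_nonneg ?_
  rw [hρ.isHermitian.trace_eq_sum_eigenvalues] at htr
  simpa using congrArg Complex.re htr

end Entropy

section Channel

variable {n k m : ℕ} {A : Fin m → Matrix (Fin k) (Fin n) ℂ}

theorem exists_mulVec_mem_span_singleton_of_vnEntropy_eq (hA : ∑ i, (A i)ᴴ * A i = 1)
    (hS : ∀ ρ : Matrix (Fin n) (Fin n) ℂ, ρ.PosSemidef → ρ.trace = 1 →
      vnEntropy (krausMap A ρ) = vnEntropy ρ)
    (ψ : Fin n → ℂ) : ∃ u, ∀ i, A i *ᵥ ψ ∈ ℂ ∙ u := by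
  rcases eq_or_ne ψ 0 with rfl | hψ
  · exact ⟨0, fun i => by simp⟩
  obtain ⟨r, v, hv, rfl⟩ := exists_eq_smul_with_dotProduct_star_self_eq_one hψ
  set ρ := vecMulVec v (star v)
  have hρ : ρ.PosSemidef := posSemidef_vecMulVec_self_star v
  have htr : ρ.trace = 1 := by rw [trace_vecMulVec, dotProduct_comm, hv]
  have hpure : vnEntropy (krausMap A ρ) = 0 := by
    rw [hS ρ hρ htr, vnEntropy_eq_zero_iff_rank_le_one hρ htr]
    exact rank_vecMulVec_le v (star v)
  rw [vnEntropy_eq_zero_iff_rank_le_one (posSemidef_krausMap A hρ)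
    (by rw [trace_krausMap hA, htr]), krausMap_vecMulVec, rank_self_mul_conjTranspose] at hpure
  obtain ⟨u, hu⟩ := exists_forall_col_mem_span_singleton_of_rank_le_one hpure
  exact ⟨u, fun i => by rw [mulVec_smul]; exact Submodule.smul_mem _ r (hu i)⟩

theorem exists_vnEntropy_krausMap_ne (hA : ∑ i, (A i)ᴴ * A i = 1) (hn : 1 < n) {u : Fin k → ℂ}
    (hu : ∀ i x, A i *ᵥ x ∈ ℂ ∙ u) :
    ∃ ρ : Matrix (Fin n) (Fin n) ℂ, ρ.PosSemidef ∧ ρ.trace = 1 ∧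
      vnEntropy (krausMap A ρ) ≠ vnEntropy ρ := by
  set ρ : Matrix (Fin n) (Fin n) ℂ := diagonal fun _ => (((n : ℝ)⁻¹ : ℝ) : ℂ)
  have hρ : ρ.PosSemidef := PosSemidef.diagonal fun _ => Complex.zero_le_real.2 (by positivity)
  have htr : ρ.trace = 1 := by
    simp [ρ, mul_inv_cancel₀ (show (n : ℂ) ≠ 0 by exact_mod_cast (by omega : n ≠ 0))]
  have hrank : ρ.rank = n := by simp [ρ, rank_diagonal, show n ≠ 0 by omega]
  refine ⟨ρ, hρ, htr, fun h => ?_⟩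
  have h0 : vnEntropy (krausMap A ρ) = 0 :=
    (vnEntropy_eq_zero_iff_rank_le_one (posSemidef_krausMap A hρ)
      (by rw [trace_krausMap hA, htr])).2 (rank_krausMap_le_one hu ρ)
  have := (vnEntropy_eq_zero_iff_rank_le_one hρ htr).1 (h ▸ h0)
  omega

end Channel

/-- A quantum channel in Kraus form,
`Φ(X) = ∑ᵢ Aᵢ X Aᵢᴴ` with `∑ᵢ Aᵢᴴ Aᵢ = 1`, preserves the von Neumann entropy
of every density matrix if and only if `Φ(X) = V X Vᴴ` for some isometry `V`
(`Vᴴ V = 1`). -/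
theorem channel_entropy_preserving_iff_isometry {n k m : ℕ}
    (A : Fin m → Matrix (Fin k) (Fin n) ℂ)
    (hA : ∑ i, (A i)ᴴ * A i = 1)
    (Φ : Matrix (Fin n) (Fin n) ℂ → Matrix (Fin k) (Fin k) ℂ)
    (hΦ : ∀ X, Φ X = ∑ i, A i * X * (A i)ᴴ) :
    (∀ ρ : Matrix (Fin n) (Fin n) ℂ, ρ.PosSemidef → ρ.trace = 1 →
        vnEntropy (Φ ρ) = vnEntropy ρ)
    ↔ ∃ V : Matrix (Fin k) (Fin n) ℂ, Vᴴ * V = 1 ∧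
        ∀ X : Matrix (Fin n) (Fin n) ℂ, Φ X = V * X * Vᴴ := by
  obtain rfl : Φ = krausMap A := funext hΦ
  refine ⟨fun hS => ?_, ?_⟩
  · have hpure := exists_mulVec_mem_span_singleton_of_vnEntropy_eq hA hS
    obtain ⟨B, hB⟩ : ∃ B : Matrix (Fin k) (Fin n) ℂ, ∀ i, ∃ c : ℂ, A i = c • B := by
      rcases le_or_gt n 1 with hn | hn
      · have : Subsingleton (Fin n) := Fin.subsingleton_iff_le_one.2 hn
        obtain ⟨u, hu⟩ := hpure fun _ => 1
        exact exists_eq_smul_of_subsingleton hu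
      · refine (exists_eq_smul_or_exists_mulVec_mem_span_singleton A hpure).resolve_right ?_
        rintro ⟨u, hu⟩
        obtain ⟨ρ, hρ, htr, hne⟩ := exists_vnEntropy_krausMap_ne hA hn hu
        exact hne (hS ρ hρ htr)
    exact exists_isometry_of_forall_eq_smul hA hB
  · rintro ⟨V, hV, hΦV⟩ ρ hρ -
    rw [hΦV ρ]
    exact vnEntropy_conj_isometry hV hρ.isHermitian
end

section
/- Let n ≥ 2 and let u, v ∈ ℂⁿ be unit vectors. Consider the density matrix σ = (1/2)·(u·uᴴ + v·vᴴ) (where x·xᴴ denotes the rank-one matrix with entries xᵢ·conj(xⱼ)). If the von Neumann entropy of σ equals log 2, then ⟨u, v⟩ = 0. -/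
/-!
The density matrix `σ` has trace `1` and rank at most `2`, so its eigenvalues form a probability
vector with at most two nonzero entries. Comparing `-x log x` with its tangent line at `1/2` shows
that such a vector has entropy at most `log 2`, with equality only for `(1/2, 1/2, 0, …, 0)`.
Hence `tr σ² = ∑ λᵢ² = 1/2`, whereas expanding the square gives `tr σ² = (1 + |⟨u, v⟩|²)/2`.
-/

open Matrix ComplexOrder

namespace Real

/-- The right-hand side is the tangent line of `negMulLog` at `a`. -/
lemma negMulLog_lt_sub_sub_mul_log {a x : ℝ} (ha : 0 < a) (hx : 0 ≤ x) (hxa : x ≠ a) :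
    negMulLog x < a - x - x * log a := by
  have hy : x / a ≠ 1 := by rwa [ne_eq, div_eq_one_iff_eq ha.ne']
  have hlt := negMulLog_lt_one_sub_self (div_nonneg hx ha.le) hy
  calc negMulLog x = x / a * negMulLog a + a * negMulLog (x / a) := by
        rw [← negMulLog_mul, mul_div_cancel₀ _ ha.ne']
    _ < x / a * negMulLog a + a * (1 - x / a) := by gcongr
    _ = a - x - x * log a := by
        rw [negMulLog]; field_simp; ring

lemma negMulLog_le_sub_sub_mul_log {a x : ℝ} (ha : 0 < a) (hx : 0 ≤ x) :
    negMulLog x ≤ a - x - x * log a := by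
  rcases eq_or_ne x a with rfl | hxa
  · simp [negMulLog]
  · exact (negMulLog_lt_sub_sub_mul_log ha hx hxa).le

end Real

section Entropy

open Real

theorem eq_zero_or_eq_inv_of_log_le_sum_negMulLog {ι : Type*} [Fintype ι] {f : ι → ℝ} {k : ℕ}
    (hk : 0 < k) (hf : ∀ i, 0 ≤ f i) (hsum : ∑ i, f i = 1)
    (hsupp : Fintype.card {i // f i ≠ 0} ≤ k) (hent : log k ≤ ∑ i, negMulLog (f i)) (i : ι) :
    f i = 0 ∨ f i = (k : ℝ)⁻¹ := by
  classical
  set S := Finset.univ.filter (f · ≠ 0)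
  set a : ℝ := (k : ℝ)⁻¹
  have ha : 0 < a := by positivity
  let gap j := a - f j - f j * log a - negMulLog (f j)
  have hgap : ∀ j ∈ S, 0 ≤ gap j := fun j _ ↦ sub_nonneg.2 (negMulLog_le_sub_sub_mul_log ha (hf j))
  have hS : (S.card : ℝ) ≤ k := by rw [← Fintype.card_subtype]; exact_mod_cast hsupp
  have hsumS : ∑ j ∈ S, f j = 1 := by rw [Finset.sum_filter_ne_zero, hsum]
  have hentS : ∑ j ∈ S, negMulLog (f j) = ∑ j, negMulLog (f j) :=
    Finset.sum_filter_of_ne fun j _ h hj ↦ h (by simp [hj])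
  have htotal : ∑ j ∈ S, gap j ≤ 0 := by
    simp only [gap, Finset.sum_sub_distrib, ← Finset.sum_mul, Finset.sum_const, nsmul_eq_mul,
      hsumS, hentS, a, log_inv]
    have : (S.card : ℝ) * (k : ℝ)⁻¹ ≤ 1 := by
      rw [← div_eq_mul_inv]; exact div_le_one_of_le₀ hS (by positivity)
    linarith
  by_contra! hi
  have hiS : i ∈ S := by simpa [S] using hi.1
  have hzero := (Finset.sum_eq_zero_iff_of_nonneg hgap).1
    (le_antisymm htotal (Finset.sum_nonneg hgap)) i hiS
  exact (negMulLog_lt_sub_sub_mul_log ha (hf i) hi.2).ne' (sub_eq_zero.1 hzero)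

theorem sum_sq_eq_inv_of_log_le_sum_negMulLog {ι : Type*} [Fintype ι] {f : ι → ℝ} {k : ℕ}
    (hk : 0 < k) (hf : ∀ i, 0 ≤ f i) (hsum : ∑ i, f i = 1)
    (hsupp : Fintype.card {i // f i ≠ 0} ≤ k) (hent : log k ≤ ∑ i, negMulLog (f i)) :
    ∑ i, f i ^ 2 = (k : ℝ)⁻¹ := by
  have hsq : ∀ i, f i ^ 2 = (k : ℝ)⁻¹ * f i := fun i ↦ by
    rcases eq_zero_or_eq_inv_of_log_le_sum_negMulLog hk hf hsum hsupp hent i with h | h <;>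
      rw [h] <;> ring
  simp_rw [hsq, ← Finset.mul_sum, hsum, mul_one]

end Entropy

namespace Matrix

variable {ι 𝕜 : Type*} [Fintype ι] [RCLike 𝕜]

theorem IsHermitian.trace_mul_self [DecidableEq ι] {A : Matrix ι ι 𝕜} (hA : A.IsHermitian) :
    (A * A).trace = ∑ i, (hA.eigenvalues i : 𝕜) ^ 2 := by
  conv_lhs => rw [hA.spectral_theorem, ← map_mul, Unitary.conjStarAlgAut_apply, trace_mul_cycle,
    Unitary.coe_star_mul_self, one_mul, diagonal_mul_diagonal, trace_diagonal]
  simp [sq]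

theorem rank_add_le {m n K : Type*} [Fintype n] [Field K] (A B : Matrix m n K) :
    (A + B).rank ≤ A.rank + B.rank := by
  rw [rank, rank, rank, mulVecLin_add]
  exact (Submodule.finrank_mono (LinearMap.range_add_le _ _)).trans
    (Submodule.finrank_add_le_finrank_add_finrank _ _)

theorem trace_vecMulVec_mul_vecMulVec {R : Type*} [CommSemiring R] (a b c d : ι → R) :
    (vecMulVec a b * vecMulVec c d).trace = (b ⬝ᵥ c) * (d ⬝ᵥ a) := by
  rw [vecMulVec_mul_vecMulVec, trace_vecMulVec, dotProduct_smul, smul_eq_mul, dotProduct_comm a d]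

theorem rank_vecMulVec_add_vecMulVec_le {K : Type*} [Field K] (a b c d : ι → K) :
    (vecMulVec a b + vecMulVec c d).rank ≤ 2 :=
  (rank_add_le _ _).trans (add_le_add (rank_vecMulVec_le a b) (rank_vecMulVec_le c d))

def equalMixture (u v : ι → 𝕜) : Matrix ι ι 𝕜 :=
  (1 / 2 : 𝕜) • (vecMulVec u (star u) + vecMulVec v (star v))

variable (u v : ι → 𝕜)

theorem equalMixture_posSemidef : (equalMixture u v).PosSemidef :=
  ((posSemidef_vecMulVec_self_star u).add (posSemidef_vecMulVec_self_star v)).smul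
    (one_div_nonneg.2 zero_le_two)

theorem rank_equalMixture_le : (equalMixture u v).rank ≤ 2 := by
  rw [equalMixture,
    rank_smul_of_mem_nonZeroDivisors _ (mem_nonZeroDivisors_of_ne_zero (by norm_num))]
  exact rank_vecMulVec_add_vecMulVec_le _ _ _ _

variable {u v} (hu : star u ⬝ᵥ u = 1) (hv : star v ⬝ᵥ v = 1)
include hu hv

theorem trace_equalMixture : (equalMixture u v).trace = 1 := by
  rw [equalMixture, trace_smul, trace_add, trace_vecMulVec, trace_vecMulVec, dotProduct_comm u,
    dotProduct_comm v, hu, hv]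
  norm_num

theorem trace_equalMixture_mul_self :
    (equalMixture u v * equalMixture u v).trace = (1 + ‖star u ⬝ᵥ v‖ ^ 2 : 𝕜) / 2 := by
  have hvu : star v ⬝ᵥ u = star (star u ⬝ᵥ v) := star_dotProduct _ _
  simp only [equalMixture, smul_mul_smul_comm, add_mul, mul_add, trace_smul, trace_add,
    trace_vecMulVec_mul_vecMulVec, hu, hv, hvu, RCLike.star_def, RCLike.mul_conj, RCLike.conj_mul]
  ring

end Matrix

theorem orthogonal_of_equal_mixture_max_entropy_general {n : ℕ}
    (u v : Fin n → ℂ) (hu : star u ⬝ᵥ u = 1) (hv : star v ⬝ᵥ v = 1)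
    (σ : Matrix (Fin n) (Fin n) ℂ)
    (hσ : σ = (1 / 2 : ℂ) • (vecMulVec u (star u) + vecMulVec v (star v)))
    (hS : vnEntropy σ = Real.log 2) :
    star u ⬝ᵥ v = 0 := by
  classical
  obtain rfl : σ = equalMixture u v := hσ
  have hpsd := equalMixture_posSemidef u v
  set ev := hpsd.isHermitian.eigenvalues
  have hsum : ∑ i, ev i = 1 := by
    apply RCLike.ofReal_injective (K := ℂ)
    rw [RCLike.ofReal_sum, ← hpsd.isHermitian.trace_eq_sum_eigenvalues, trace_equalMixture hu hv,
      RCLike.ofReal_one]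
  have hsupp : Fintype.card {i // ev i ≠ 0} ≤ 2 :=
    hpsd.isHermitian.rank_eq_card_non_zero_eigs ▸ rank_equalMixture_le u v
  have hent : Real.log (2 : ℕ) ≤ ∑ i, Real.negMulLog (ev i) := by
    rw [vnEntropy, dif_pos hpsd.isHermitian] at hS
    rw [hS, Nat.cast_ofNat]
  have hpure : ∑ i, ev i ^ 2 = 2⁻¹ := by
    exact_mod_cast sum_sq_eq_inv_of_log_le_sum_negMulLog two_pos hpsd.eigenvalues_nonneg hsum hsupp
      hent
  have hmix : (1 + ‖star u ⬝ᵥ v‖ ^ 2) / 2 = (2⁻¹ : ℝ) := by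
    apply RCLike.ofReal_injective (K := ℂ)
    rw [← hpure]
    push_cast
    rw [← trace_equalMixture_mul_self hu hv, hpsd.isHermitian.trace_mul_self]
  have hnorm : ‖star u ⬝ᵥ v‖ ^ 2 = 0 := by linarith
  simpa using hnorm

/-- If `u`, `v` are unit vectors in `ℂⁿ` (`n ≥ 2`) and the
density matrix `σ = (1/2)(u uᴴ + v vᴴ)` has von Neumann entropy `log 2`, then
`u` and `v` are orthogonal. -/
theorem orthogonal_of_equal_mixture_max_entropy {n : ℕ} (hn : 2 ≤ n)
    (u v : Fin n → ℂ) (hu : star u ⬝ᵥ u = 1) (hv : star v ⬝ᵥ v = 1)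
    (σ : Matrix (Fin n) (Fin n) ℂ)
    (hσ : σ = (1 / 2 : ℂ) • (vecMulVec u (star u) + vecMulVec v (star v)))
    (hS : vnEntropy σ = Real.log 2) :
    star u ⬝ᵥ v = 0 :=
  orthogonal_of_equal_mixture_max_entropy_general u v hu hv σ hσ hS
end
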